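/- arXiv:1309.7854 — 6 statements merged into one kernel-verified Lean document; each statement's English description precedes it below -/
import Mathlib

section
/- Let G be a finite p-group of order p^n with coclass 2 and |Z(G)| = p. Then |Z_2(G)/Z(G)| divides p^2, i.e. the second center Z_2(G) has order at most p^3. -/
/-!
Let `c = n - 2` be the nilpotency class. In a `p`-group every proper inclusion
`Z_i(G) < Z_{i+1}(G)` (`i < c`) of the upper central series costs a factor `p` in the order, and
`G / Z_{c-1}(G)` is not cyclic, so `|G : Z_{c-1}(G)| ≥ p²`. For `c ≥ 3` this gives
`|G : Z_2(G)| ≥ p^(c-1) = p^(n-3)`, i.e. `|Z_2(G)| ≤ p³`.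

The case `c = 2`, `|G| = p⁴`, cannot occur. There `g ↦ ⁅x, g⁆` is a homomorphism into
`Z(G) ≅ C_p` with kernel `C_G(x)`, so the centralizer of a noncentral `x` has order `p³`, and it is
abelian because its centre contains `Z(G)` and `x`. If `y` does not commute with `x`, then
`C_G(x) ∩ C_G(y)` has order at least `p²` and so contains a noncentral `a`; the abelian group
`C_G(x)` lies in `C_G(a)`, whence `C_G(x) = C_G(a) ∋ y`, a contradiction.
-/

open scoped commutatorElement

namespace Subgroup

variable {G : Type*} [Group G]

lemma commutatorElement_mul_right_of_mem_center {x g h : G} (hh : ⁅x, h⁆ ∈ center G) :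
    ⁅x, g * h⁆ = ⁅x, g⁆ * ⁅x, h⁆ := by
  rw [commutatorElement_mul_right_eq_mul_conj, mul_assoc _ g, mem_center_iff.mp hh g,
    mul_assoc, mul_inv_cancel_right]

def commutatorHomOfCentral (x : G) (hx : ∀ g, ⁅x, g⁆ ∈ center G) : G →* center G :=
  MonoidHom.mk' (fun g ↦ ⟨⁅x, g⁆, hx g⟩) fun _ _ ↦
    Subtype.ext (commutatorElement_mul_right_of_mem_center (hx _))

lemma ker_commutatorHomOfCentral (x : G) (hx : ∀ g, ⁅x, g⁆ ∈ center G) :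
    (commutatorHomOfCentral x hx).ker = centralizer {x} := by
  ext g
  rw [MonoidHom.mem_ker, mem_centralizer_singleton_iff, ← Subtype.val_inj]
  exact commutatorElement_eq_one_iff_mul_comm.trans eq_comm

lemma index_centralizer_dvd_card_center (x : G) (hx : ∀ g, ⁅x, g⁆ ∈ center G) :
    (centralizer {x}).index ∣ Nat.card (center G) := by
  rw [← ker_commutatorHomOfCentral x hx, index_ker]
  exact card_subgroup_dvd_card _

lemma center_eq_top_of_index_dvd_prime {p : ℕ} [Fact p.Prime] (h : (center G).index ∣ p) :
    center G = ⊤ := by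
  have : IsCyclic (G ⧸ center G) := isCyclic_of_card_dvd_prime (p := p) (by rwa [← index_eq_card])
  have := isMulCommutative_of_isCyclic_quotient_center_self G
  exact center_eq_top

variable {p : ℕ} [Fact p.Prime]

lemma index_centralizer_eq_of_notMem_center (hZ : Nat.card (center G) = p) {x : G}
    (hx : ∀ g, ⁅x, g⁆ ∈ center G) (hxZ : x ∉ center G) : (centralizer {x}).index = p := by
  refine ((Nat.dvd_prime Fact.out).mp (hZ ▸ index_centralizer_dvd_card_center x hx)).resolve_left
    ?_
  rwa [index_eq_one, centralizer_eq_top_iff_subset, Set.singleton_subset_iff]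

lemma card_centralizer_eq_of_notMem_center {m : ℕ} (hG : Nat.card G = p ^ (m + 1))
    (hZ : Nat.card (center G) = p) {x : G} (hx : ∀ g, ⁅x, g⁆ ∈ center G) (hxZ : x ∉ center G) :
    Nat.card (centralizer {x}) = p ^ m := by
  have h := card_mul_index (centralizer {x})
  rw [index_centralizer_eq_of_notMem_center hZ hx hxZ, hG, pow_succ] at h
  exact Nat.eq_of_mul_eq_mul_right (Fact.out : p.Prime).pos h

variable [Finite G]

lemma _root_.IsPGroup.prime_dvd_relIndex_of_lt (hG : IsPGroup p G) {H K : Subgroup G}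
    (hHK : H < K) : p ∣ H.relIndex K := by
  obtain ⟨s, hs⟩ := (hG.to_subgroup K).index (H.subgroupOf K)
  have hs0 : s ≠ 0 := by
    rintro rfl
    exact hHK.not_ge (relIndex_eq_one.mp (by rw [relIndex, hs, pow_zero]))
  rw [relIndex, hs]
  exact dvd_pow_self p hs0

lemma _root_.IsPGroup.card_mul_dvd_card_of_lt (hG : IsPGroup p G) {H K : Subgroup G}
    (hHK : H < K) : Nat.card H * p ∣ Nat.card K := by
  rw [← relIndex_bot_left, ← relIndex_bot_left,
    ← relIndex_mul_relIndex ⊥ H K bot_le hHK.le]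
  exact mul_dvd_mul_left _ (hG.prime_dvd_relIndex_of_lt hHK)

lemma _root_.IsPGroup.sq_dvd_index_center (hG : IsPGroup p G) (h : center G ≠ ⊤) :
    p ^ 2 ∣ (center G).index := by
  obtain ⟨s, hs⟩ := hG.index (center G)
  rw [hs]
  refine pow_dvd_pow p (not_lt.mp fun hs2 ↦ h (center_eq_top_of_index_dvd_prime (p := p) ?_))
  exact hs ▸ (pow_dvd_pow p (by omega : s ≤ 1)).trans (pow_one p).dvd

lemma _root_.IsPGroup.sq_dvd_index_upperCentralSeries (hG : IsPGroup p G) (k : ℕ)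
    (hk : Group.nilpotencyClass G = k + 2) :
    p ^ 2 ∣ (upperCentralSeries G (k + 1)).index := by
  induction k generalizing G with
  | zero =>
    have := hG.isNilpotent
    rw [zero_add, upperCentralSeries_one]
    refine hG.sq_dvd_index_center fun htop ↦ ?_
    have := upperCentralSeries_eq_top_iff_nilpotencyClass_le.mp
      ((upperCentralSeries_one G).trans htop)
    omega
  | succ k ih =>
    have hQ : Group.nilpotencyClass (G ⧸ center G) = k + 2 := by
      rw [Group.nilpotencyClass_quotient_center, hk]; rfl
    rw [← comap_upperCentralSeries_quotient_center,
      index_comap_of_surjective _ (QuotientGroup.mk'_surjective _)]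
    exact ih (hG.to_quotient _) hQ

lemma _root_.IsPGroup.pow_dvd_relIndex_upperCentralSeries (hG : IsPGroup p G) {k m : ℕ}
    (h : k + m ≤ Group.nilpotencyClass G) :
    p ^ m ∣ (upperCentralSeries G k).relIndex (upperCentralSeries G (k + m)) := by
  induction m with
  | zero => simp
  | succ m ih =>
    have hlt : upperCentralSeries G (k + m) < upperCentralSeries G (k + (m + 1)) :=
      upperCentralSeries.StrictMonoOn G (Set.mem_Iic.mpr (by omega)) (Set.mem_Iic.mpr h)
        (by omega)
    rw [← relIndex_mul_relIndex _ _ _ (upperCentralSeries_mono G (by omega)) hlt.le, pow_succ]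
    exact mul_dvd_mul (ih (by omega)) (hG.prime_dvd_relIndex_of_lt hlt)

lemma _root_.IsPGroup.pow_dvd_index_upperCentralSeries (hG : IsPGroup p G) {k : ℕ}
    (hk : k < Group.nilpotencyClass G) (hc : 2 ≤ Group.nilpotencyClass G) :
    p ^ (Group.nilpotencyClass G + 1 - k) ∣ (upperCentralSeries G k).index := by
  obtain ⟨m, hm⟩ : ∃ m, Group.nilpotencyClass G = k + m + 1 :=
    ⟨Group.nilpotencyClass G - k - 1, by omega⟩
  obtain ⟨j, hj⟩ : ∃ j, Group.nilpotencyClass G = j + 2 := ⟨Group.nilpotencyClass G - 2, by omega⟩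
  have hkm : k + m = j + 1 := by omega
  rw [← relIndex_mul_index (upperCentralSeries_mono G (Nat.le_add_right k m)),
    show Group.nilpotencyClass G + 1 - k = m + 2 by omega, pow_add]
  refine mul_dvd_mul (hG.pow_dvd_relIndex_upperCentralSeries (by omega)) ?_
  rw [hkm]
  exact hG.sq_dvd_index_upperCentralSeries j hj

lemma center_centralizer_eq_top (hG : Nat.card G = p ^ 4) (hZ : Nat.card (center G) = p) {x : G}
    (hx : ∀ g, ⁅x, g⁆ ∈ center G) (hxZ : x ∉ center G) : center (centralizer {x}) = ⊤ := by
  set C := centralizer {x}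
  have hlt : (center G).subgroupOf C < center C := by
    refine SetLike.lt_iff_le_and_exists.mpr
      ⟨fun c hc ↦ ?_, ⟨x, mem_centralizer_singleton_iff.mpr rfl⟩, ?_,
        fun h ↦ hxZ (mem_subgroupOf.mp h)⟩
    · exact mem_center_iff.mpr fun d ↦ Subtype.ext (mem_center_iff.mp (mem_subgroupOf.mp hc) d)
    · exact mem_center_iff.mpr fun d ↦ Subtype.ext (mem_centralizer_singleton_iff.mp d.2)
  have hcard : Nat.card ((center G).subgroupOf C) = p := by
    rw [← hZ]
    exact Nat.card_congr (subgroupOfEquivOfLe (center_le_centralizer _)).toEquiv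
  have hp : p.Prime := Fact.out
  obtain ⟨t, ht⟩ := ((IsPGroup.of_card hG).to_subgroup C).card_mul_dvd_card_of_lt hlt
  have h := card_mul_index (center C)
  rw [ht, hcard, card_centralizer_eq_of_notMem_center hG hZ hx hxZ] at h
  refine center_eq_top_of_index_dvd_prime (p := p) ⟨t, ?_⟩
  refine Nat.eq_of_mul_eq_mul_left (Nat.mul_pos hp.pos hp.pos) ?_
  linarith

lemma upperCentralSeries_two_ne_top_of_card_eq_pow_four (hG : Nat.card G = p ^ 4)
    (hZ : Nat.card (center G) = p) : upperCentralSeries G 2 ≠ ⊤ := by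
  intro htop
  have hcomm : ∀ x g : G, ⁅x, g⁆ ∈ center G := fun x g ↦
    upperCentralSeries_one G ▸ mem_upperCentralSeries_succ_iff.mp (htop ▸ mem_top x) g
  have hp : p.Prime := Fact.out
  obtain ⟨x, hxZ⟩ : ∃ x, x ∉ center G := by
    by_contra! h
    have : p ^ 4 = p ^ 1 := by rw [← hG, pow_one, ← hZ, (eq_top_iff' _).mpr h, card_top]
    exact absurd (Nat.pow_right_injective hp.two_le this) (by norm_num)
  obtain ⟨y, hyx⟩ : ∃ y, y * x ≠ x * y := by simpa [mem_center_iff] using hxZ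
  have hyZ : y ∉ center G := fun hy ↦ hyx (mem_center_iff.mp hy x).symm
  set C := centralizer {x}
  set D := centralizer {y}
  obtain ⟨a, ⟨haC, haD⟩, haZ⟩ : ∃ a ∈ C ⊓ D, a ∉ center G := by
    by_contra! h
    have hcard : Nat.card (C ⊓ D : Subgroup G) ≤ p := hZ ▸ card_le_of_le h
    have hindex : (C ⊓ D).index ≤ p * p := by
      have hCi : C.index = p := index_centralizer_eq_of_notMem_center hZ (hcomm _) hxZ
      have hDi : D.index = p := index_centralizer_eq_of_notMem_center hZ (hcomm _) hyZ
      exact index_inf_le.trans_eq (by rw [hCi, hDi])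
    have h : p ^ 4 ≤ p * (p * p) := hG ▸ card_mul_index (C ⊓ D) ▸ Nat.mul_le_mul hcard hindex
    nlinarith [hp.two_le]
  have hCa : C = centralizer {a} := by
    refine eq_of_le_of_card_ge (fun c hc ↦ ?_) (by
      rw [card_centralizer_eq_of_notMem_center hG hZ (hcomm _) haZ,
        card_centralizer_eq_of_notMem_center hG hZ (hcomm _) hxZ])
    have ha : (⟨a, haC⟩ : C) ∈ center C :=
      (center_centralizer_eq_top hG hZ (hcomm x) hxZ).symm ▸ mem_top _
    exact mem_centralizer_singleton_iff.mpr (congrArg Subtype.val (mem_center_iff.mp ha ⟨c, hc⟩))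
  have hyC : y ∈ C :=
    hCa ▸ mem_centralizer_singleton_iff.mpr (mem_centralizer_singleton_iff.mp haD).symm
  exact hyx (mem_centralizer_singleton_iff.mp hyC)

end Subgroup

/-- If `G` has order `p^n`, coclass 2, and `|Z(G)| = p`, then `|Z₂(G)|` divides `p^3`
(i.e. `|Z₂(G)/Z(G)|` divides `p^2`). -/
theorem stmt_1 {G : Type*} [Group G] [Finite G] (p n : ℕ) (hp : p.Prime)
    (hcard : Nat.card G = p ^ n)
    [Group.IsNilpotent G] (hclass : Group.nilpotencyClass G + 2 = n)
    (hZ : Nat.card (Subgroup.center G) = p) :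
    Nat.card (upperCentralSeries G 2) ∣ p ^ 3 := by
  show Nat.card (Subgroup.upperCentralSeries G 2) ∣ p ^ 3
  have : Fact p.Prime := ⟨hp⟩
  have hc2 : 2 ≤ Group.nilpotencyClass G := by
    by_contra! hc
    have hZtop : Subgroup.center G = ⊤ := Subgroup.upperCentralSeries_one G ▸
      Subgroup.upperCentralSeries_eq_top_iff_nilpotencyClass_le.mpr (by omega)
    rw [hZtop, Subgroup.card_top, hcard] at hZ
    have := Nat.pow_right_injective hp.two_le (hZ.trans (pow_one p).symm)
    omega
  have hc3 : 3 ≤ Group.nilpotencyClass G := by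
    by_contra! hc
    exact Subgroup.upperCentralSeries_two_ne_top_of_card_eq_pow_four
      (hcard.trans (by congr 1; omega)) hZ
      (Subgroup.upperCentralSeries_eq_top_iff_nilpotencyClass_le.mpr (by omega))
  obtain ⟨t, ht⟩ :=
    (IsPGroup.of_card hcard).pow_dvd_index_upperCentralSeries (k := 2) (by omega) hc2
  have h := Subgroup.card_mul_index (Subgroup.upperCentralSeries G 2)
  rw [ht, hcard, show n = (Group.nilpotencyClass G + 1 - 2) + 3 by omega, pow_add] at h
  exact Dvd.intro t (Nat.eq_of_mul_eq_mul_left (pow_pos hp.pos _) (by rw [← h]; ring))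
end

section
/- Let G be a finite p-group of maximal class of order p^m with m ≥ 4 and p ≥ 3. Then the quotient G/γ_3(G) has exponent p, where γ_3(G) is the third term of the lower central series. -/
/-!
Write `γᵢ` for the lower central series with `γ₁ = G`; in Mathlib `γᵢ₊₁` is
`(⊤ : Subgroup G).lowerCentralSeries i`.

The series `G = γ₁ > γ₂ > ⋯ > γₘ = 1` has `m - 1` strict steps, each of `p`-power index, and
the first has index at least `p²` because `G/γ₂` cyclic would force `γ₂ = γ₃`. As `|G| = pᵐ`,
this gives `|G : γ₂| = p²` and `|γᵢ : γᵢ₊₁| = p` for `i ≥ 2`; so `G/γ₂` is elementary abelian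
and `Gᵖ ≤ γ₂`.

Now pass to `G/γ₄`, where `γ₃` is central. If `xᵖ ∉ γ₃`, then `γ₂ = ⟨xᵖ⟩γ₃` since `γ₃` has
prime index in `γ₂`, so `x` centralizes `γ₂`. Hence every `x` outside the proper subgroup
`C_G(γ₂)` has `xᵖ ∈ γ₃`. Modulo `γ₃` all commutators are central of order `p`, so
`(xy)ᵖ = xᵖ yᵖ [y, x]^(p(p-1)/2) = xᵖ yᵖ` for odd `p`; as every element is a product of two
elements outside `C_G(γ₂)`, all `p`-th powers lie in `γ₃`.
-/

open Subgroup
open scoped commutatorElement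

section CommutatorIdentity

variable {G : Type*} [Group G] {x y : G}

theorem pow_mul_eq_commutatorElement_pow_mul (hy : Commute ⁅y, x⁆ y) (n : ℕ) :
    y ^ n * x = ⁅y, x⁆ ^ n * x * y ^ n := by
  induction n with
  | zero => simp
  | succ n ih =>
    have hyx : y * x = ⁅y, x⁆ * x * y := by group
    calc y ^ (n + 1) * x = y * (y ^ n * x) := by rw [pow_succ', mul_assoc]
      _ = ⁅y, x⁆ ^ n * (y * x) * y ^ n := by
        rw [ih, ← mul_assoc, ← mul_assoc, ← (hy.pow_left n).eq, mul_assoc _ y x]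
      _ = ⁅y, x⁆ ^ (n + 1) * x * y ^ (n + 1) := by
        rw [hyx, pow_succ ⁅y, x⁆, pow_succ' y]; simp only [mul_assoc]

theorem mul_pow_eq_commutatorElement_pow_choose_mul (hx : Commute ⁅y, x⁆ x)
    (hy : Commute ⁅y, x⁆ y) (n : ℕ) :
    (x * y) ^ n = ⁅y, x⁆ ^ n.choose 2 * x ^ n * y ^ n := by
  induction n with
  | zero => simp
  | succ n ih =>
    calc (x * y) ^ (n + 1) = ⁅y, x⁆ ^ n.choose 2 * x ^ n * (y ^ n * x) * y := by
          rw [pow_succ, ih]; group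
      _ = ⁅y, x⁆ ^ n.choose 2 * (x ^ n * ⁅y, x⁆ ^ n) * x * y ^ n * y := by
          rw [pow_mul_eq_commutatorElement_pow_mul hy]; group
      _ = ⁅y, x⁆ ^ (n + 1).choose 2 * x ^ (n + 1) * y ^ (n + 1) := by
          rw [← (hx.pow_pow n n).eq, Nat.choose_succ_succ, Nat.choose_one_right]; group

theorem mul_pow_odd_of_commutatorElement_pow_eq_one {p : ℕ} (hp : Odd p)
    (hx : Commute ⁅y, x⁆ x) (hy : Commute ⁅y, x⁆ y) (hc : ⁅y, x⁆ ^ p = 1) :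
    (x * y) ^ p = x ^ p * y ^ p := by
  obtain ⟨k, rfl⟩ := hp
  have hchoose : (2 * k + 1).choose 2 = (2 * k + 1) * k := by
    rw [Nat.choose_two_right, Nat.add_sub_cancel, mul_left_comm,
      Nat.mul_div_cancel_left _ two_pos]
  rw [mul_pow_eq_commutatorElement_pow_choose_mul hx hy, hchoose, pow_mul, hc, one_pow, one_mul]

end CommutatorIdentity

theorem Nat.mul_pow_dvd_of_forall_mul_dvd_succ {f : ℕ → ℕ} {p N : ℕ}
    (h : ∀ n < N, p * f n ∣ f (n + 1)) {n k : ℕ} (hnk : n + k ≤ N) :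
    f n * p ^ k ∣ f (n + k) := by
  induction k with
  | zero => simp
  | succ k ih =>
    calc f n * p ^ (k + 1) = p * (f n * p ^ k) := by ring
      _ ∣ p * f (n + k) := mul_dvd_mul_left p (ih (by omega))
      _ ∣ f (n + (k + 1)) := h _ (by omega)

namespace IsPGroup

variable {p : ℕ} [hp : Fact p.Prime] {G : Type*} [Group G] [Finite G]

theorem mul_index_dvd_index_of_lt (hG : IsPGroup p G) {H K : Subgroup G} (h : H < K) :
    p * K.index ∣ H.index := by
  rw [← relIndex_mul_index h.le]
  refine mul_dvd_mul_right ?_ _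
  obtain ⟨n, hn⟩ := hG.index H
  obtain ⟨k, -, hk⟩ := (Nat.dvd_prime_pow hp.out).mp (hn ▸ relIndex_dvd_index_of_le h.le)
  obtain _ | k := k
  · exact absurd (relIndex_eq_one.mp (by simpa using hk)) h.not_ge
  · exact hk ▸ dvd_pow_self p k.succ_ne_zero

theorem sq_dvd_card_of_not_isCyclic (hG : IsPGroup p G) (h : ¬IsCyclic G) :
    p ^ 2 ∣ Nat.card G := by
  obtain ⟨n, hn⟩ := iff_card.mp hG
  by_cases hn1 : n ≤ 1
  · exact absurd (isCyclic_of_card_dvd_prime (hn ▸ (pow_dvd_pow p hn1).trans (pow_one p).dvd)) h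
  · exact hn ▸ pow_dvd_pow p (by omega)

end IsPGroup

theorem pow_eq_one_of_card_eq_prime_sq_of_not_isCyclic {p : ℕ} (hp : p.Prime) {G : Type*}
    [Group G] [Finite G] (hcard : Nat.card G = p ^ 2) (h : ¬IsCyclic G) (g : G) : g ^ p = 1 := by
  obtain ⟨k, hk, hg⟩ := (Nat.dvd_prime_pow hp).mp (hcard ▸ orderOf_dvd_natCard g)
  have hk2 : k ≠ 2 := by
    rintro rfl
    exact h (isCyclic_of_orderOf_eq_card g (hg.trans hcard.symm))
  rw [← orderOf_dvd_iff_pow_eq_one, hg]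
  exact (pow_dvd_pow p (by omega : k ≤ 1)).trans (pow_one p).dvd

namespace Subgroup

variable {G : Type*} [Group G]

theorem eq_of_lt_of_le_of_relIndex_prime {H K M : Subgroup G} (hp : (H.relIndex K).Prime)
    (hHM : H < M) (hMK : M ≤ K) : M = K := by
  have hHM' : H.relIndex M ≠ 1 := relIndex_eq_one.not.mpr hHM.not_ge
  rw [← relIndex_mul_relIndex H M K hHM.le hMK, Nat.prime_mul_iff] at hp
  exact le_antisymm hMK (relIndex_eq_one.mp (hp.resolve_right (by tauto)).2)

theorem map_top_lowerCentralSeries_of_surjective {K : Type*} [Group K] {f : G →* K}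
    (hf : Function.Surjective f) (n : ℕ) :
    ((⊤ : Subgroup G).lowerCentralSeries n).map f = (⊤ : Subgroup K).lowerCentralSeries n := by
  rw [map_lowerCentralSeries, map_top_of_surjective f hf]

theorem lowerCentralSeries_succ_lt_of_lt_nilpotencyClass [Group.IsNilpotent G] {n : ℕ}
    (hn : n < Group.nilpotencyClass G) :
    (⊤ : Subgroup G).lowerCentralSeries (n + 1) < (⊤ : Subgroup G).lowerCentralSeries n := by
  refine lt_of_le_of_ne (lowerCentralSeries_antitone _ n.le_succ) fun heq => ?_
  have hconst : ∀ k, (⊤ : Subgroup G).lowerCentralSeries (n + k) =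
      (⊤ : Subgroup G).lowerCentralSeries n := by
    intro k
    induction k with
    | zero => rfl
    | succ k ih => rw [← add_assoc, lowerCentralSeries_succ, ih, ← lowerCentralSeries_succ, heq]
  have hbot := (hconst _).symm.trans
    (lowerCentralSeries_eq_bot_iff_nilpotencyClass_le.mpr (Nat.le_add_left _ n))
  exact hn.not_ge (lowerCentralSeries_eq_bot_iff_nilpotencyClass_le.mp hbot)

theorem lowerCentralSeries_one_le_two_of_isCyclic
    (h : IsCyclic (G ⧸ (⊤ : Subgroup G).lowerCentralSeries 1)) :
    (⊤ : Subgroup G).lowerCentralSeries 1 ≤ (⊤ : Subgroup G).lowerCentralSeries 2 := by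
  refine Normal.quotient_commutative_iff_commutator_le.mp
    (MonoidHom.isMulCommutative_of_isCyclic_of_ker_le_center
      (QuotientGroup.map _ ((⊤ : Subgroup G).lowerCentralSeries 1) (MonoidHom.id G)
        (by rw [comap_id]; exact lowerCentralSeries_antitone ⊤ one_le_two)) ?_)
  have hmap := map_top_lowerCentralSeries_of_surjective
    (QuotientGroup.mk'_surjective ((⊤ : Subgroup G).lowerCentralSeries 2))
  rw [QuotientGroup.ker_map, comap_id, hmap, ← commutator_top_right_eq_bot_iff_le_center,
    ← lowerCentralSeries_succ, ← hmap, map_eq_bot_iff, QuotientGroup.ker_mk']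

theorem not_isCyclic_quotient_lowerCentralSeries_one [Group.IsNilpotent G]
    (h : 1 < Group.nilpotencyClass G) :
    ¬IsCyclic (G ⧸ (⊤ : Subgroup G).lowerCentralSeries 1) := fun hc =>
  (lowerCentralSeries_succ_lt_of_lt_nilpotencyClass h).not_ge
    (lowerCentralSeries_one_le_two_of_isCyclic hc)

theorem index_lowerCentralSeries_of_maximalClass [Finite G] [Group.IsNilpotent G]
    {p m : ℕ} (hp : p.Prime) (hcard : Nat.card G = p ^ m)
    (hclass : Group.nilpotencyClass G + 1 = m) (hm : 3 ≤ m) {n : ℕ} (hn1 : 1 ≤ n) (hnm : n < m) :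
    ((⊤ : Subgroup G).lowerCentralSeries n).index = p ^ (n + 1) := by
  have : Fact p.Prime := ⟨hp⟩
  have hG : IsPGroup p G := IsPGroup.of_card hcard
  have hstep : ∀ n < m - 1, p * ((⊤ : Subgroup G).lowerCentralSeries n).index ∣
      ((⊤ : Subgroup G).lowerCentralSeries (n + 1)).index := fun n hn =>
    hG.mul_index_dvd_index_of_lt (lowerCentralSeries_succ_lt_of_lt_nilpotencyClass (by omega))
  have hfirst : p ^ 2 ∣ ((⊤ : Subgroup G).lowerCentralSeries 1).index := by
    rw [index_eq_card]
    exact (hG.to_quotient _).sq_dvd_card_of_not_isCyclic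
      (not_isCyclic_quotient_lowerCentralSeries_one (by omega))
  have hlast : ((⊤ : Subgroup G).lowerCentralSeries (m - 1)).index = p ^ m := by
    rw [← hcard, ← index_bot, ← lowerCentralSeries_nilpotencyClass, ← hclass, Nat.add_sub_cancel]
  apply Nat.dvd_antisymm
  · obtain ⟨k, hk⟩ : ∃ k, m - 1 = n + k := ⟨m - 1 - n, by omega⟩
    have hdvd := Nat.mul_pow_dvd_of_forall_mul_dvd_succ hstep (n := n) (k := k) hk.ge
    rw [← hk, hlast, show m = n + 1 + k by omega, pow_add] at hdvd
    exact Nat.dvd_of_mul_dvd_mul_right (pow_pos hp.pos k) hdvd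
  · have hdvd := Nat.mul_pow_dvd_of_forall_mul_dvd_succ hstep (n := 1) (k := n - 1) (by omega)
    rw [show 1 + (n - 1) = n by omega] at hdvd
    calc p ^ (n + 1) = p ^ 2 * p ^ (n - 1) := by rw [← pow_add]; congr 1; omega
      _ ∣ _ := (mul_dvd_mul_right hfirst _).trans hdvd

variable {p : ℕ}

theorem mul_pow_quotient_lowerCentralSeries_two (hodd : Odd p)
    (hidx : ((⊤ : Subgroup G).lowerCentralSeries 2).relIndex
      ((⊤ : Subgroup G).lowerCentralSeries 1) = p)
    (x y : G ⧸ (⊤ : Subgroup G).lowerCentralSeries 2) : (x * y) ^ p = x ^ p * y ^ p := by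
  set π := QuotientGroup.mk' ((⊤ : Subgroup G).lowerCentralSeries 2)
  obtain ⟨a, rfl⟩ := QuotientGroup.mk'_surjective _ x
  obtain ⟨b, rfl⟩ := QuotientGroup.mk'_surjective _ y
  have hba : ⁅b, a⁆ ∈ (⊤ : Subgroup G).lowerCentralSeries 1 :=
    commutator_mem_commutator (mem_top b) (mem_top a)
  have hcomm : ∀ z, Commute ⁅π b, π a⁆ (π z) := fun z => by
    rw [← commutatorElement_eq_one_iff_commute, ← map_commutatorElement, ← map_commutatorElement,
      QuotientGroup.mk'_apply, QuotientGroup.eq_one_iff]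
    exact commutator_mem_commutator hba (mem_top z)
  refine mul_pow_odd_of_commutatorElement_pow_eq_one hodd (hcomm a) (hcomm b) ?_
  rw [← map_commutatorElement, ← map_pow, QuotientGroup.mk'_apply, QuotientGroup.eq_one_iff,
    ← hidx]
  exact pow_relIndex_mem _ hba

theorem pow_mem_lowerCentralSeries_two_of_notMem_centralizer (hp : p.Prime)
    (hidx : ((⊤ : Subgroup G).lowerCentralSeries 2).relIndex
      ((⊤ : Subgroup G).lowerCentralSeries 1) = p)
    (hcenter : (⊤ : Subgroup G).lowerCentralSeries 2 ≤ center G) {g : G}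
    (hg1 : g ^ p ∈ (⊤ : Subgroup G).lowerCentralSeries 1)
    (hg : g ∉ centralizer ((⊤ : Subgroup G).lowerCentralSeries 1 : Set G)) :
    g ^ p ∈ (⊤ : Subgroup G).lowerCentralSeries 2 := by
  by_contra hg2
  refine hg fun h hh => mem_centralizer_singleton_iff.mp ?_
  have hM := eq_of_lt_of_le_of_relIndex_prime (hidx ▸ hp)
    (M := (⊤ : Subgroup G).lowerCentralSeries 1 ⊓ centralizer {g})
    (SetLike.lt_iff_le_and_exists.mpr
      ⟨le_inf (lowerCentralSeries_antitone ⊤ one_le_two) (hcenter.trans (center_le_centralizer _)),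
        g ^ p, ⟨hg1, mem_centralizer_singleton_iff.mpr (Commute.self_pow g p).symm.eq⟩, hg2⟩)
    inf_le_left
  exact inf_eq_left.mp hM hh

theorem pow_mem_lowerCentralSeries_two_of_three_eq_bot (hp : p.Prime) (hodd : Odd p)
    (hidx : ((⊤ : Subgroup G).lowerCentralSeries 2).relIndex
      ((⊤ : Subgroup G).lowerCentralSeries 1) = p)
    (h3 : (⊤ : Subgroup G).lowerCentralSeries 3 = ⊥)
    (h2 : (⊤ : Subgroup G).lowerCentralSeries 2 ≠ ⊥)
    (hpow : ∀ g : G, g ^ p ∈ (⊤ : Subgroup G).lowerCentralSeries 1) (g : G) :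
    g ^ p ∈ (⊤ : Subgroup G).lowerCentralSeries 2 := by
  set C := centralizer ((⊤ : Subgroup G).lowerCentralSeries 1 : Set G)
  have hkey : ∀ {g}, g ∉ C → g ^ p ∈ (⊤ : Subgroup G).lowerCentralSeries 2 := fun hg =>
    pow_mem_lowerCentralSeries_two_of_notMem_centralizer hp hidx
      (commutator_top_right_eq_bot_iff_le_center.mp h3) (hpow _) hg
  obtain ⟨y, hy⟩ : ∃ y, y ∉ C := by
    by_contra! hC
    exact h2 (commutator_top_right_eq_bot_iff_le_center.mpr fun x hx =>
      mem_center_iff.mpr fun z => (hC z x hx).symm)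
  by_cases hg : g ∈ C
  · have hgy : g * y ∉ C := fun h => hy (by simpa using mul_mem (inv_mem hg) h)
    have hy' : y⁻¹ ∉ C := fun h => hy (by simpa using inv_mem h)
    rw [← QuotientGroup.eq_one_iff, QuotientGroup.mk_pow, show g = g * y * y⁻¹ by group,
      QuotientGroup.mk_mul, mul_pow_quotient_lowerCentralSeries_two hodd hidx,
      ← QuotientGroup.mk_pow, ← QuotientGroup.mk_pow, (QuotientGroup.eq_one_iff _).mpr (hkey hgy),
      (QuotientGroup.eq_one_iff _).mpr (hkey hy'), one_mul]
  · exact hkey hg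

theorem pow_mem_lowerCentralSeries_two (hp : p.Prime) (hodd : Odd p)
    (hidx : ((⊤ : Subgroup G).lowerCentralSeries 2).relIndex
      ((⊤ : Subgroup G).lowerCentralSeries 1) = p)
    (h23 : ¬(⊤ : Subgroup G).lowerCentralSeries 2 ≤ (⊤ : Subgroup G).lowerCentralSeries 3)
    (hpow : ∀ g : G, g ^ p ∈ (⊤ : Subgroup G).lowerCentralSeries 1) (g : G) :
    g ^ p ∈ (⊤ : Subgroup G).lowerCentralSeries 2 := by
  set π := QuotientGroup.mk' ((⊤ : Subgroup G).lowerCentralSeries 3)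
  have hmap := map_top_lowerCentralSeries_of_surjective (QuotientGroup.mk'_surjective
    ((⊤ : Subgroup G).lowerCentralSeries 3))
  have hker : π.ker = (⊤ : Subgroup G).lowerCentralSeries 3 := QuotientGroup.ker_mk' _
  have hquot := pow_mem_lowerCentralSeries_two_of_three_eq_bot hp hodd ?_ ?_ ?_ ?_ (π g)
  · rwa [← map_pow, ← hmap, ← mem_comap, comap_map_eq_self
      (hker.trans_le (lowerCentralSeries_antitone ⊤ (by norm_num)))] at hquot
  · rw [← hmap, ← hmap, relIndex_map_map, hker, sup_of_le_left, sup_of_le_left, hidx]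
    all_goals exact lowerCentralSeries_antitone ⊤ (by norm_num)
  · rw [← hmap, map_eq_bot_iff, hker]
  · rwa [Ne, ← hmap, map_eq_bot_iff, hker]
  · intro r
    obtain ⟨g, rfl⟩ := QuotientGroup.mk'_surjective _ r
    rw [← map_pow, ← hmap]
    exact mem_map_of_mem _ (hpow g)

end Subgroup

/-- A finite `p`-group of maximal class of order `p^m`, `m ≥ 4`, `p ≥ 3`, satisfies
`exp(G/γ₃(G)) = p`.  (Note `γ₃(G) = lowerCentralSeries G 2` since Mathlib's lower
central series starts with `lowerCentralSeries G 0 = ⊤ = γ₁(G)`.) -/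
theorem stmt_4 {G : Type*} [Group G] [Finite G] (p m : ℕ) (hp : p.Prime) (hp3 : 3 ≤ p)
    (hm : 4 ≤ m) (hcard : Nat.card G = p ^ m)
    [Group.IsNilpotent G] (hclass : Group.nilpotencyClass G + 1 = m) :
    Monoid.exponent (G ⧸ (⊤ : Subgroup G).lowerCentralSeries 2) = p := by
  have hindex {n : ℕ} (hn1 : 1 ≤ n) (hnm : n < m) :=
    index_lowerCentralSeries_of_maximalClass hp hcard hclass (by omega) hn1 hnm
  have hidx : ((⊤ : Subgroup G).lowerCentralSeries 2).relIndex
      ((⊤ : Subgroup G).lowerCentralSeries 1) = p := by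
    have h := relIndex_mul_index (Subgroup.lowerCentralSeries_antitone (⊤ : Subgroup G) one_le_two)
    rw [hindex le_rfl (by omega), hindex one_le_two (by omega), pow_succ p 2] at h
    exact Nat.eq_of_mul_eq_mul_left (pow_pos hp.pos 2) (by rw [mul_comm, h])
  have hpow (g : G) : g ^ p ∈ (⊤ : Subgroup G).lowerCentralSeries 1 := by
    rw [← QuotientGroup.eq_one_iff, QuotientGroup.mk_pow]
    exact pow_eq_one_of_card_eq_prime_sq_of_not_isCyclic hp
      (by rw [← index_eq_card, hindex le_rfl (by omega)])
      (not_isCyclic_quotient_lowerCentralSeries_one (by omega)) _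
  have hexp : Monoid.exponent (G ⧸ (⊤ : Subgroup G).lowerCentralSeries 2) ∣ p := by
    refine Monoid.exponent_dvd_of_forall_pow_eq_one fun q => ?_
    obtain ⟨g, rfl⟩ := QuotientGroup.mk_surjective q
    rw [← QuotientGroup.mk_pow, QuotientGroup.eq_one_iff]
    exact pow_mem_lowerCentralSeries_two hp (hp.odd_of_ne_two (by omega)) hidx
      (lowerCentralSeries_succ_lt_of_lt_nilpotencyClass (n := 2) (by omega)).not_ge hpow g
  refine ((Nat.dvd_prime hp).mp hexp).resolve_left fun hexp1 => ?_
  have := Monoid.exp_eq_one_iff.mp hexp1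
  have h := hindex one_le_two (by omega)
  rw [index_eq_card, Nat.card_of_subsingleton (1 : G ⧸ _)] at h
  exact absurd h.symm (Nat.one_lt_pow (by omega) hp.one_lt).ne'
end

section
/- Let G be a group, N a normal subgroup of G. Then the group of derivations (crossed homomorphisms) Z^1(G/N, Z(N)), with G/N acting on Z(N) by conjugation, is isomorphic to the group Aut_N^N(G) of automorphisms of G that normalize N, act trivially on G/N, and act trivially on N, via the map sending a derivation γ to the automorphism g ↦ g·γ(Ng). -/
/-!
By the cocycle identity `g ↦ g · γ g` is multiplicative. A cocycle that is constant on
`N`-cosets vanishes on `N`, so `γ (g n) = n⁻¹ (γ g) n` for `n ∈ N`; this makes `g ↦ g (γ g)⁻¹`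
an inverse and shows that composing the automorphisms of `γ₁` and `γ₂` gives
`g ↦ g (γ₁ g) (γ₂ g)`. Conversely `g ↦ g⁻¹ φ g` is a cocycle for every endomorphism `φ`, and
when `φ` fixes the normal subgroup `N` pointwise, computing `φ (g n) = φ ((g n g⁻¹) g)` in two
ways shows that its values centralize `N`.
-/

open Subgroup

section

variable {G : Type*} [Group G]

def IsCocycle (γ : G → G) : Prop :=
  ∀ g₁ g₂ : G, γ (g₁ * g₂) = g₂⁻¹ * γ g₁ * g₂ * γ g₂

/-- `Z¹(G/N, Z(N))`, a derivation of `G/N` being encoded as the function it induces on `G`. -/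
def centerCrossedHoms (N : Subgroup G) : Set (G → G) :=
  {γ | (∀ g, γ g ∈ N ⊓ centralizer (N : Set G)) ∧ (∀ g : G, ∀ m ∈ N, γ (m * g) = γ g) ∧
    IsCocycle γ}

/-- `Aut_N^N(G)`. -/
def autFixingSubgroupAndQuotient (N : Subgroup G) : Set (MulAut G) :=
  {φ | (∀ m ∈ N, φ m = m) ∧ ∀ g : G, g⁻¹ * φ g ∈ N}

section Cocycle

variable {N : Subgroup G} {γ : G → G}

theorem IsCocycle.apply_one (hcoc : IsCocycle γ) : γ 1 = 1 := by
  have h := hcoc 1 1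
  simp only [mul_one, inv_one, one_mul] at h
  exact left_eq_mul.mp h

theorem IsCocycle.apply_eq_one_of_mem (hcoc : IsCocycle γ)
    (hconst : ∀ g : G, ∀ m ∈ N, γ (m * g) = γ g) {m : G} (hm : m ∈ N) : γ m = 1 := by
  rw [← mul_one m, hconst 1 m hm, hcoc.apply_one]

theorem IsCocycle.apply_mul_of_mem (hcoc : IsCocycle γ)
    (hconst : ∀ g : G, ∀ m ∈ N, γ (m * g) = γ g) (g : G) {n : G} (hn : n ∈ N) :
    γ (g * n) = n⁻¹ * γ g * n := by
  rw [hcoc, hcoc.apply_eq_one_of_mem hconst hn, mul_one]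

def autOfCocycle (hmem : ∀ g, γ g ∈ N) (hconst : ∀ g : G, ∀ m ∈ N, γ (m * g) = γ g)
    (hcoc : IsCocycle γ) : MulAut G where
  toFun g := g * γ g
  invFun g := g * (γ g)⁻¹
  left_inv g := by
    simp only [hcoc.apply_mul_of_mem hconst g (hmem g)]
    group
  right_inv g := by
    simp only [hcoc.apply_mul_of_mem hconst g (inv_mem (hmem g))]
    group
  map_mul' g₁ g₂ := by
    simp only [hcoc g₁ g₂]
    group

variable (hmem : ∀ g, γ g ∈ N) (hconst : ∀ g : G, ∀ m ∈ N, γ (m * g) = γ g)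
  (hcoc : IsCocycle γ)

@[simp]
theorem autOfCocycle_apply (g : G) : autOfCocycle hmem hconst hcoc g = g * γ g := rfl

theorem autOfCocycle_apply_of_mem {m : G} (hm : m ∈ N) :
    autOfCocycle hmem hconst hcoc m = m := by
  rw [autOfCocycle_apply, hcoc.apply_eq_one_of_mem hconst hm, mul_one]

theorem autOfCocycle_apply_autOfCocycle_apply {γ' : G → G} (hmem' : ∀ g, γ' g ∈ N)
    (hconst' : ∀ g : G, ∀ m ∈ N, γ' (m * g) = γ' g)
    (hcoc' : IsCocycle γ') (g : G) :
    autOfCocycle hmem hconst hcoc (autOfCocycle hmem' hconst' hcoc' g) = g * (γ g * γ' g) := by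
  rw [autOfCocycle_apply, autOfCocycle_apply, hcoc.apply_mul_of_mem hconst g (hmem' g)]
  group

end Cocycle

section InvMulMap

variable {F : Type*} [FunLike F G G] [MonoidHomClass F G G] (φ : F)

theorem isCocycle_inv_mul_map : IsCocycle fun g => g⁻¹ * φ g := fun g₁ g₂ => by
  simp only [map_mul]
  group

variable {N : Subgroup G} {φ}

theorem inv_mul_map_mul_left (hfix : ∀ m ∈ N, φ m = m) (g : G) {m : G} (hm : m ∈ N) :
    (m * g)⁻¹ * φ (m * g) = g⁻¹ * φ g := by
  rw [map_mul, hfix m hm]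
  group

theorem inv_mul_map_mem_centralizer (hN : N.Normal) (hfix : ∀ m ∈ N, φ m = m) (g : G) :
    g⁻¹ * φ g ∈ centralizer (N : Set G) := by
  rw [mem_centralizer_iff]
  intro n hn
  have key : φ g * n = g * n * g⁻¹ * φ g :=
    calc φ g * n = φ (g * n) := by rw [map_mul, hfix n hn]
      _ = φ (g * n * g⁻¹ * g) := by rw [inv_mul_cancel_right]
      _ = g * n * g⁻¹ * φ g := by rw [map_mul, hfix _ (hN.conj_mem n hn g)]
  calc n * (g⁻¹ * φ g) = g⁻¹ * (g * n * g⁻¹ * φ g) := by group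
    _ = g⁻¹ * φ g * n := by rw [← key]; group

end InvMulMap

def centerCrossedHomsEquiv (N : Subgroup G) (hN : N.Normal) :
    centerCrossedHoms N ≃ autFixingSubgroupAndQuotient N where
  toFun γ :=
    ⟨autOfCocycle (fun g => (γ.2.1 g).1) γ.2.2.1 γ.2.2.2,
      fun _ hm => autOfCocycle_apply_of_mem _ _ _ hm,
      fun g => by simpa using (γ.2.1 g).1⟩
  invFun φ :=
    ⟨fun g => g⁻¹ * φ.1 g,
      fun g => ⟨φ.2.2 g, inv_mul_map_mem_centralizer hN φ.2.1 g⟩,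
      fun g _ hm => inv_mul_map_mul_left φ.2.1 g hm,
      isCocycle_inv_mul_map φ.1⟩
  left_inv γ := Subtype.ext <| funext fun g => by simp
  right_inv φ := Subtype.ext <| MulEquiv.ext fun g => by simp

theorem centerCrossedHomsEquiv_mul_apply (N : Subgroup G) (hN : N.Normal)
    (γ γ' : centerCrossedHoms N) (g : G) :
    ((centerCrossedHomsEquiv N hN γ : MulAut G) * centerCrossedHomsEquiv N hN γ') g =
      g * (γ.1 g * γ'.1 g) :=
  autOfCocycle_apply_autOfCocycle_apply (fun g => (γ.2.1 g).1) γ.2.2.1 γ.2.2.2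
    (fun g => (γ'.2.1 g).1) γ'.2.2.1 γ'.2.2.2 g

end

/-- For `N ⊴ G`, the group `Z¹(G/N, Z(N))` of derivations (with `G/N` acting on `Z(N)`
by conjugation) is naturally isomorphic to `Aut_N^N(G)`, the group of automorphisms of
`G` fixing `N` elementwise and acting trivially on `G/N`, via `γ ↦ (g ↦ g·γ(Ng))`.
A derivation is encoded as a function `γ : G → G` with values in `Z(N)`, constant on
cosets of `N`, satisfying the cocycle identity `γ(xy) = γ(x)^y γ(y)`; the isomorphism
is encoded as a bijection that intertwines the (pointwise) products. -/
theorem stmt_8 {G : Type*} [Group G] (N : Subgroup G) (hN : N.Normal) :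
    ∃ e : {γ : G → G // (∀ g, γ g ∈ N ⊓ Subgroup.centralizer (N : Set G)) ∧
        (∀ g : G, ∀ m ∈ N, γ (m * g) = γ g) ∧
        (∀ g₁ g₂ : G, γ (g₁ * g₂) = g₂⁻¹ * γ g₁ * g₂ * γ g₂)} ≃
      {φ : MulAut G // (∀ m ∈ N, φ m = m) ∧ ∀ g : G, g⁻¹ * φ g ∈ N},
      (∀ γ, ∀ g : G, (e γ : MulAut G) g = g * γ.val g) ∧
      (∀ γ₁ γ₂, ∀ g : G,
        ((e γ₁ : MulAut G) * (e γ₂ : MulAut G)) g = g * (γ₁.val g * γ₂.val g)) :=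
  ⟨centerCrossedHomsEquiv N hN, fun _ _ => rfl, centerCrossedHomsEquiv_mul_apply N hN⟩
end

section
/- Let G be a group and N a normal subgroup of G. If γ : G/N → Z(N) is a derivation with respect to the conjugation action, then the map φ : G → G defined by φ(g) = g·γ(Ng) is an automorphism of G fixing N elementwise and inducing the identity on G/N. -/
/-!
The map `g ↦ g γ(g)` is multiplicative by the cocycle identity. Since `γ` is trivial on `N` and its
values commute with `N`, the identity gives `γ(gn) = n⁻¹ γ(g) n γ(n) = γ(g)` for `n ∈ N`; as
`γ(g) ∈ N`, this makes `g ↦ g γ(g)⁻¹` an inverse. It fixes `N` because `γ` vanishes there.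
-/

def IsConjDerivation {G : Type*} [Group G] (γ : G → G) : Prop :=
  ∀ g₁ g₂ : G, γ (g₁ * g₂) = g₂⁻¹ * γ g₁ * g₂ * γ g₂

namespace IsConjDerivation

variable {G : Type*} [Group G] {γ : G → G} {N : Subgroup G}

theorem map_one (hγ : IsConjDerivation γ) : γ 1 = 1 := by
  simpa using hγ 1 1

theorem mul_map_mul (hγ : IsConjDerivation γ) (g₁ g₂ : G) :
    g₁ * g₂ * γ (g₁ * g₂) = g₁ * γ g₁ * (g₂ * γ g₂) := by
  rw [hγ]
  group

theorem map_eq_one_of_mem (hγ : IsConjDerivation γ) (hcoset : ∀ g : G, ∀ m ∈ N, γ (m * g) = γ g)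
    {m : G} (hm : m ∈ N) : γ m = 1 := by
  simpa [hγ.map_one] using hcoset 1 m hm

theorem map_mul_of_mem (hγ : IsConjDerivation γ) (hcentral : ∀ g, γ g ∈ Subgroup.centralizer N)
    (hcoset : ∀ g : G, ∀ m ∈ N, γ (m * g) = γ g) (g : G) {n : G} (hn : n ∈ N) :
    γ (g * n) = γ g := by
  have hcomm : n * γ g = γ g * n := hcentral g n hn
  rw [hγ, hγ.map_eq_one_of_mem hcoset hn, mul_one, mul_assoc, ← hcomm, inv_mul_cancel_left]

def mulEquiv (hγ : IsConjDerivation γ) (hmem : ∀ g, γ g ∈ N)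
    (hright : ∀ g : G, ∀ n ∈ N, γ (g * n) = γ g) : G ≃* G where
  toFun g := g * γ g
  invFun g := g * (γ g)⁻¹
  left_inv g := by
    simp only [hright g _ (hmem g), mul_inv_cancel_right]
  right_inv g := by
    simp only [hright g _ (inv_mem (hmem g)), inv_mul_cancel_right]
  map_mul' := hγ.mul_map_mul

theorem mulEquiv_apply (hγ : IsConjDerivation γ) (hmem : ∀ g, γ g ∈ N)
    (hright : ∀ g : G, ∀ n ∈ N, γ (g * n) = γ g) (g : G) :
    hγ.mulEquiv hmem hright g = g * γ g :=
  rfl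

end IsConjDerivation

theorem stmt_9_general {G : Type*} [Group G] (N : Subgroup G) (γ : G → G)
    (hval : ∀ g, γ g ∈ N ⊓ Subgroup.centralizer (N : Set G))
    (hcoset : ∀ g : G, ∀ m ∈ N, γ (m * g) = γ g)
    (hcocycle : ∀ g₁ g₂ : G, γ (g₁ * g₂) = g₂⁻¹ * γ g₁ * g₂ * γ g₂) :
    ∃ φ : G ≃* G, (∀ g : G, φ g = g * γ g) ∧ (∀ m ∈ N, φ m = m) ∧
      (∀ g : G, g⁻¹ * φ g ∈ N) := by
  have hγ : IsConjDerivation γ := hcocycle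
  have hmem : ∀ g, γ g ∈ N := fun g => (hval g).1
  have hright := hγ.map_mul_of_mem (fun g => (hval g).2) hcoset
  refine ⟨hγ.mulEquiv hmem hright, hγ.mulEquiv_apply hmem hright, fun m hm => ?_, fun g => ?_⟩
  · rw [hγ.mulEquiv_apply, hγ.map_eq_one_of_mem hcoset hm, mul_one]
  · rw [hγ.mulEquiv_apply, inv_mul_cancel_left]
    exact hmem g

/-- If `N ⊴ G` and `γ : G/N → Z(N)` is a derivation for the conjugation action
(encoded as a function `γ : G → G` with values in `Z(N)`, constant on cosets of `N`,
with `γ(xy) = γ(x)^y γ(y)`), then `g ↦ g·γ(Ng)` is an automorphism of `G` fixing `N`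
elementwise and inducing the identity on `G/N`. -/
theorem stmt_9 {G : Type*} [Group G] (N : Subgroup G) (hN : N.Normal) (γ : G → G)
    (hval : ∀ g, γ g ∈ N ⊓ Subgroup.centralizer (N : Set G))
    (hcoset : ∀ g : G, ∀ m ∈ N, γ (m * g) = γ g)
    (hcocycle : ∀ g₁ g₂ : G, γ (g₁ * g₂) = g₂⁻¹ * γ g₁ * g₂ * γ g₂) :
    ∃ φ : G ≃* G, (∀ g : G, φ g = g * γ g) ∧ (∀ m ∈ N, φ m = m) ∧
      (∀ g : G, g⁻¹ * φ g ∈ N) :=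
  stmt_9_general N γ hval hcoset hcocycle
end

section
/- Let G be a group, N a normal subgroup with Z(N) of exponent p. Then every nontrivial derivation γ : G/N → Z(N) gives rise via φ(g) = g·γ(Ng) to an automorphism of G of order p. -/
/-!
Since `γ` is constant on the cosets of `N` and takes values in `N`, iterating `φ(g) = g * γ g`
gives `φ^k(g) = g * (γ g)^k`. Hence `φ^p = 1` by the exponent hypothesis, while `φ ≠ 1`
because `γ` is nontrivial; as `p` is prime, `φ` has order `p`.
-/

namespace Subgroup.Normal

variable {G : Type*} [Group G] {N : Subgroup G} {γ : G → G}

theorem apply_mul_of_mem_right (hN : N.Normal) (hcoset : ∀ g : G, ∀ m ∈ N, γ (m * g) = γ g)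
    (g : G) {n : G} (hn : n ∈ N) : γ (g * n) = γ g := by
  rw [show g * n = (g * n * g⁻¹) * g by group, hcoset g _ (hN.conj_mem n hn g)]

def cocycleMulEquiv (hN : N.Normal) (hγN : ∀ g, γ g ∈ N)
    (hcoset : ∀ g : G, ∀ m ∈ N, γ (m * g) = γ g)
    (hcocycle : ∀ g₁ g₂ : G, γ (g₁ * g₂) = g₂⁻¹ * γ g₁ * g₂ * γ g₂) : G ≃* G where
  toFun g := g * γ g
  invFun g := g * (γ g)⁻¹
  left_inv g := by
    simp only [hN.apply_mul_of_mem_right hcoset g (hγN g), mul_inv_cancel_right]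
  right_inv g := by
    simp only [hN.apply_mul_of_mem_right hcoset g (inv_mem (hγN g)), inv_mul_cancel_right]
  map_mul' a b := by
    simp only [hcocycle]
    group

variable (hN : N.Normal) (hγN : ∀ g, γ g ∈ N) (hcoset : ∀ g : G, ∀ m ∈ N, γ (m * g) = γ g)
  (hcocycle : ∀ g₁ g₂ : G, γ (g₁ * g₂) = g₂⁻¹ * γ g₁ * g₂ * γ g₂)

@[simp]
theorem cocycleMulEquiv_apply (g : G) :
    hN.cocycleMulEquiv hγN hcoset hcocycle g = g * γ g :=
  rfl

theorem cocycleMulEquiv_pow_apply (k : ℕ) (g : G) :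
    (hN.cocycleMulEquiv hγN hcoset hcocycle ^ k) g = g * γ g ^ k := by
  induction k with
  | zero => simp
  | succ k ih =>
    rw [pow_succ', MulAut.mul_apply, ih, cocycleMulEquiv_apply,
      hN.apply_mul_of_mem_right hcoset g (pow_mem (hγN g) k), pow_succ, mul_assoc]

theorem cocycleMulEquiv_pow_eq_one_iff (k : ℕ) :
    hN.cocycleMulEquiv hγN hcoset hcocycle ^ k = 1 ↔ ∀ g, γ g ^ k = 1 := by
  simp only [MulEquiv.ext_iff, cocycleMulEquiv_pow_apply, MulAut.one_apply, mul_eq_left]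

theorem orderOf_cocycleMulEquiv {p : ℕ} [Fact p.Prime] (hexp : ∀ g, γ g ^ p = 1)
    (hnontriv : ∃ g, γ g ≠ 1) :
    orderOf (hN.cocycleMulEquiv hγN hcoset hcocycle) = p := by
  refine orderOf_eq_prime ((cocycleMulEquiv_pow_eq_one_iff ..).2 hexp) fun h ↦ ?_
  obtain ⟨g, hg⟩ := hnontriv
  have hγ1 := (cocycleMulEquiv_pow_eq_one_iff hN hγN hcoset hcocycle 1).1 (by rwa [pow_one]) g
  exact hg (by rwa [pow_one] at hγ1)

end Subgroup.Normal

/-- If `N ⊴ G` with `Z(N)` of exponent `p`, then every nontrivial derivation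
`γ : G/N → Z(N)` (encoded as a function `γ : G → G` with values in `Z(N)`, constant
on cosets of `N`, satisfying the cocycle identity) yields, via `φ(g) = g·γ(Ng)`, an
automorphism of `G` of order `p`. -/
theorem stmt_10 {G : Type*} [Group G] (N : Subgroup G) (hN : N.Normal)
    (p : ℕ) (hp : p.Prime)
    (hexp : ∀ z ∈ N ⊓ Subgroup.centralizer (N : Set G), z ^ p = 1)
    (γ : G → G)
    (hval : ∀ g, γ g ∈ N ⊓ Subgroup.centralizer (N : Set G))
    (hcoset : ∀ g : G, ∀ m ∈ N, γ (m * g) = γ g)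
    (hcocycle : ∀ g₁ g₂ : G, γ (g₁ * g₂) = g₂⁻¹ * γ g₁ * g₂ * γ g₂)
    (hnontriv : ∃ g : G, γ g ≠ 1) :
    ∃ φ : G ≃* G, (∀ g : G, φ g = g * γ g) ∧ orderOf φ = p := by
  have : Fact p.Prime := ⟨hp⟩
  have hγN : ∀ g, γ g ∈ N := fun g ↦ (hval g).1
  exact ⟨hN.cocycleMulEquiv hγN hcoset hcocycle, fun _ ↦ rfl,
    hN.orderOf_cocycleMulEquiv hγN hcoset hcocycle (fun g ↦ hexp _ (hval g)) hnontriv⟩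
end

section
/- Let G be a finite purely nonabelian p-group. Then the order of the group of central automorphisms Aut_c(G) equals the order of Hom(G, Z(G)). -/
/-!
`φ ↦ (g ↦ g⁻¹ φ g)` embeds `Aut_c(G)` into `Hom(G, Z(G))`, and `f` lies in the image exactly
when `g ↦ g f(g)` is injective, i.e. when no `x ≠ 1` has `f x = x⁻¹`. Suppose such an `x`
exists; replacing it by a power we may take it of order `p`. Its image `π x` in the
abelianization is nontrivial (as `f` factors through `π`), so it has a finite `p`-height `h`:
`π x = π(y)^(p^h)` but `π x` is not a `p^(h+1)`-th power. Then `w = f y` is central of order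
`p^(h+1)` with `w^(p^h) = x⁻¹`, and a character `χ` of the abelianization of exponent `p^(h+1)`
not trivial on `π x` maps `⟨w⟩` isomorphically onto its image, so `ker (χ ∘ π)` is a complement
of the abelian direct factor `⟨w⟩`.
-/

open Subgroup

def HasNontrivialAbelianDirectFactor (G : Type*) [Group G] : Prop :=
  ∃ A B : Subgroup G, A ≠ ⊥ ∧ (∀ a ∈ A, ∀ a' ∈ A, a * a' = a' * a) ∧
    A ⊓ B = ⊥ ∧ A ⊔ B = ⊤ ∧ (∀ a ∈ A, ∀ b ∈ B, a * b = b * a)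

section Complement

variable {G M : Type*} [Group G] [Group M]

theorem MonoidHom.zpowers_inf_ker_eq_bot (ψ : G →* M) {g : G}
    (h : orderOf (ψ g) = orderOf g) : zpowers g ⊓ ψ.ker = ⊥ := by
  rw [eq_bot_iff]
  rintro _ ⟨⟨k, rfl⟩, hk⟩
  rw [mem_bot, ← orderOf_dvd_iff_zpow_eq_one, ← h, orderOf_dvd_iff_zpow_eq_one, ← map_zpow]
  exact hk

theorem MonoidHom.zpowers_sup_ker_eq_top (ψ : G →* M) {g : G}
    (h : ψ.range ≤ zpowers (ψ g)) : zpowers g ⊔ ψ.ker = ⊤ := by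
  have hmap : (zpowers g).map ψ = ψ.range :=
    le_antisymm (map_le_range ψ _) (by rwa [MonoidHom.map_zpowers])
  exact codisjoint_iff.mp (map_eq_range_iff.mp hmap)

theorem hasNontrivialAbelianDirectFactor_of_orderOf_eq {w : G} (hw : w ∈ center G)
    (hw1 : w ≠ 1) (ψ : G →* M) (hord : orderOf (ψ w) = orderOf w)
    (hrange : ψ.range ≤ zpowers (ψ w)) : HasNontrivialAbelianDirectFactor G := by
  have hcomm : ∀ a ∈ zpowers w, ∀ b : G, a * b = b * a := fun a ha b =>
    (mem_center_iff.mp (zpowers_le.mpr hw ha) b).symm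
  refine ⟨zpowers w, ψ.ker, ?_, fun a ha a' _ => hcomm a ha a', ψ.zpowers_inf_ker_eq_bot hord,
    ψ.zpowers_sup_ker_eq_top hrange, fun a ha b _ => hcomm a ha b⟩
  rwa [Ne, zpowers_eq_bot]

end Complement

theorem MonoidHom.range_le_zpowers_of_orderOf_eq {G R : Type*} [Group G] [CommRing R]
    [IsDomain R] {n : ℕ} [NeZero n] (ψ : G →* Rˣ) (hψ : ∀ x, ψ x ^ n = 1) {g : G}
    (hg : orderOf (ψ g) = n) : ψ.range ≤ zpowers (ψ g) := by
  rintro _ ⟨x, rfl⟩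
  rw [(IsPrimitiveRoot.iff_orderOf.mpr hg).zpowers_eq, mem_rootsOfUnity]
  exact hψ x

theorem CommGroup.exists_hom_pow_eq_one_apply_ne_one {A : Type*} [CommGroup A] [Finite A]
    {n : ℕ} {a : A} (ha : ∀ u : A, u ^ n ≠ a) :
    ∃ χ : A →* ℂˣ, (∀ x, χ x ^ n = 1) ∧ χ a ≠ 1 := by
  set V := (powMonoidHom n : A →* A).range
  have haV : (QuotientGroup.mk a : A ⧸ V) ≠ 1 := by
    rw [Ne, QuotientGroup.eq_one_iff]
    rintro ⟨u, hu⟩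
    exact ha u hu
  have : NeZero (Monoid.exponent (A ⧸ V) : ℂ) :=
    ⟨Nat.cast_ne_zero.mpr Monoid.exponent_ne_zero_of_finite⟩
  obtain ⟨χ, hχ⟩ := exists_apply_ne_one_of_hasEnoughRootsOfUnity (A ⧸ V) ℂ haV
  refine ⟨χ.comp (QuotientGroup.mk' V), fun x => ?_, hχ⟩
  have hxV : (QuotientGroup.mk' V) (x ^ n) = 1 := (QuotientGroup.eq_one_iff _).mpr ⟨x, rfl⟩
  rw [MonoidHom.comp_apply, ← map_pow, ← map_pow, hxV, map_one]

theorem IsPGroup.exists_pow_eq_forall_pow_succ_ne {A : Type*} [Group A] [Finite A] {p : ℕ}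
    (hA : IsPGroup p A) {a : A} (ha : a ≠ 1) :
    ∃ h : ℕ, (∃ c : A, c ^ p ^ h = a) ∧ ∀ u : A, u ^ p ^ (h + 1) ≠ a := by
  classical
  obtain ⟨k, hk⟩ := isPGroup_iff_exists_pow_pow_eq_one.mp hA
  have hex : ∃ k, ¬ ∃ c : A, c ^ p ^ k = a := ⟨k, fun ⟨c, hc⟩ => ha (hc ▸ hk c)⟩
  obtain ⟨h, hh⟩ : ∃ h, Nat.find hex = h + 1 := Nat.exists_eq_add_one_of_ne_zero fun h0 =>
    Nat.find_spec hex ⟨a, by rw [h0, pow_zero, pow_one]⟩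
  refine ⟨h, not_not.mp (Nat.find_min hex (by omega)), fun u hu => ?_⟩
  exact (hh ▸ Nat.find_spec hex) ⟨u, hu⟩

open scoped IsMulCommutative in
theorem IsPGroup.hasNontrivialAbelianDirectFactor_of_apply_eq_inv {G : Type*} [Group G]
    [Finite G] {p : ℕ} [Fact p.Prime] (hG : IsPGroup p G) (f : G →* center G) {x : G}
    (hx : x ≠ 1) (hfx : (f x : G) = x⁻¹) : HasNontrivialAbelianDirectFactor G := by
  obtain ⟨s, hs1, hsp, hfs⟩ : ∃ s : G, s ≠ 1 ∧ s ^ p = 1 ∧ (f s : G) = s⁻¹ := by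
    have hord := orderOf_eq_prime_iff.mp <|
      orderOf_pow_orderOf_div (hG.isOfFinOrder (Fact.out : p.Prime).ne_zero x).orderOf_pos.ne'
        (hG.dvd_orderOf hx)
    exact ⟨_, hord.2, hord.1, by simp [hfx, inv_pow]⟩
  set π : G →* Abelianization G := Abelianization.of
  have hπ : Function.Surjective π := QuotientGroup.mk'_surjective _
  have hfπ : ∀ g, (Abelianization.lift f (π g) : G) = f g := fun g => by
    rw [Abelianization.lift_apply_of]
  have hπs : π s ≠ 1 := fun h1 => hs1 (by simpa [h1, hfs] using hfπ s)
  obtain ⟨h, ⟨c, hc⟩, hmax⟩ :=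
    (hG.of_surjective π hπ).exists_pow_eq_forall_pow_succ_ne hπs
  obtain ⟨χ, hχn, hχs⟩ := CommGroup.exists_hom_pow_eq_one_apply_ne_one hmax
  obtain ⟨y, rfl⟩ := hπ c
  set ψ : G →* ℂˣ := χ.comp π
  have hψn : ∀ g, ψ g ^ p ^ (h + 1) = 1 := fun g => hχn (π g)
  have hwh : (f y : G) ^ p ^ h = s⁻¹ := by
    rw [← hfs, ← hfπ, ← hfπ, ← hc, map_pow, coe_pow]
  have hψw : ψ (f y) ^ p ^ h ≠ 1 := by
    rw [← map_pow, hwh, map_inv, inv_ne_one]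
    exact hχs
  have hψord : orderOf (ψ (f y)) = p ^ (h + 1) := orderOf_eq_prime_pow hψw (hψn _)
  have hword : orderOf (f y : G) = p ^ (h + 1) :=
    orderOf_eq_prime_pow (fun h1 => hψw (by rw [← map_pow, h1, map_one]))
      (by rw [pow_succ, pow_mul, hwh, inv_pow, hsp, inv_one])
  exact hasNontrivialAbelianDirectFactor_of_orderOf_eq (f y).2
    (fun h1 => hψw (by rw [h1, map_one, one_pow])) ψ (hψord.trans hword.symm)
    (ψ.range_le_zpowers_of_orderOf_eq hψn hψord)

abbrev CentralAut (G : Type*) [Group G] :=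
  {φ : MulAut G // ∀ g : G, g⁻¹ * φ g ∈ center G}

namespace CentralAut

variable {G : Type*} [Group G]

def toHom (φ : CentralAut G) : G →* center G where
  toFun g := ⟨g⁻¹ * φ.1 g, φ.2 g⟩
  map_one' := by ext; simp
  map_mul' g h := by
    ext
    have hc := mem_center_iff.mp (φ.2 g) h⁻¹
    calc (g * h)⁻¹ * φ.1 (g * h) = h⁻¹ * (g⁻¹ * φ.1 g) * φ.1 h := by rw [map_mul]; group
      _ = g⁻¹ * φ.1 g * (h⁻¹ * φ.1 h) := by rw [hc, mul_assoc]

theorem toHom_injective : Function.Injective (toHom : CentralAut G → G →* center G) :=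
  fun _ _ h => Subtype.ext <| MulEquiv.ext fun g =>
    mul_left_cancel (congrArg Subtype.val (DFunLike.congr_fun h g))

def endOfHom (f : G →* center G) : G →* G where
  toFun g := g * f g
  map_one' := by simp
  map_mul' g h := by
    have hc := mem_center_iff.mp (f g).2 h
    simp only [map_mul, coe_mul, mul_assoc]
    rw [← mul_assoc h, hc, mul_assoc]

theorem toHom_surjective [Finite G]
    (h : ∀ (f : G →* center G) (x : G), (f x : G) = x⁻¹ → x = 1) :
    Function.Surjective (toHom : CentralAut G → G →* center G) := by
  intro f
  have hinj : Function.Injective (endOfHom f) := (injective_iff_map_eq_one _).mpr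
    fun x hx => h f x (eq_inv_of_mul_eq_one_right hx)
  let φ := MulEquiv.ofBijective (endOfHom f) (Finite.injective_iff_bijective.mp hinj)
  have hφ : ∀ g, g⁻¹ * φ g = f g := fun g => inv_mul_cancel_left g _
  exact ⟨⟨φ, fun g => hφ g ▸ (f g).2⟩, MonoidHom.ext fun g => Subtype.ext (hφ g)⟩

end CentralAut

theorem stmt_16_general {G : Type*} [Group G] [Finite G] (p : ℕ) [Fact p.Prime]
    (hG : IsPGroup p G)
    (hpna : ¬ ∃ A B : Subgroup G, A ≠ ⊥ ∧ (∀ a ∈ A, ∀ a' ∈ A, a * a' = a' * a) ∧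
      A ⊓ B = ⊥ ∧ A ⊔ B = ⊤ ∧ (∀ a ∈ A, ∀ b ∈ B, a * b = b * a)) :
    Nat.card {φ : MulAut G // ∀ g : G, g⁻¹ * φ g ∈ Subgroup.center G} =
      Nat.card (G →* Subgroup.center G) := by
  refine Nat.card_eq_of_bijective CentralAut.toHom
    ⟨CentralAut.toHom_injective, CentralAut.toHom_surjective fun f x hfx => ?_⟩
  by_contra hx
  exact hpna (hG.hasNontrivialAbelianDirectFactor_of_apply_eq_inv f hx hfx)

/-- (Adney–Yen) For a finite purely nonabelian `p`-group `G`, the number of central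
automorphisms of `G` equals the number of homomorphisms `G → Z(G)`. -/
theorem stmt_16 {G : Type*} [Group G] [Finite G] (p : ℕ) [Fact p.Prime]
    (hG : IsPGroup p G) (hna : ¬ ∀ x y : G, x * y = y * x)
    (hpna : ¬ ∃ A B : Subgroup G, A ≠ ⊥ ∧ (∀ a ∈ A, ∀ a' ∈ A, a * a' = a' * a) ∧
      A ⊓ B = ⊥ ∧ A ⊔ B = ⊤ ∧ (∀ a ∈ A, ∀ b ∈ B, a * b = b * a)) :
    Nat.card {φ : MulAut G // ∀ g : G, g⁻¹ * φ g ∈ Subgroup.center G} =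
      Nat.card (G →* Subgroup.center G) :=
  stmt_16_general p hG hpna
end
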